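/- Let r be a positive integer and h ∈ F_2[x]. Let L = {(h_1, h_2) ∈ F_2[x]^2 : h_1 − h·h_2 ≡ 0 (mod x^r − 1)}. Then there exist two F_2[x]-linearly independent vectors a, b ∈ L with |a| + |b| = r, where |(f, g)| = max{deg f, deg g} is the degree-norm. -/

import Mathlib

/-!
Start from the basis `(x^r - 1, 0)`, `(h mod (x^r - 1), 1)` of `L`, whose determinant is
`x^r - 1`. Run the Euclidean algorithm on the first coordinates: replacing `(v, w)` by
`(w, v - (v₁ / w₁) w)` keeps both vectors in `L` and the determinant up to sign, and lowers
`deg w₁`. It stops once `deg w₁ < deg w₂` while `deg v₂ ≤ deg v₁`; then the leading term of the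
determinant is `v₁ w₂`, so `|v| + |w| = deg det = r`.
-/

open Polynomial

/-- The BIKE lattice `L = {(h₁, h₂) ∈ F₂[x]² : h₁ − h·h₂ ≡ 0 (mod x^r − 1)}`, as an
`F₂[x]`-submodule of `F₂[x]²`. -/
noncomputable def bikeLattice (r : ℕ) (h : Polynomial (ZMod 2)) :
    Submodule (Polynomial (ZMod 2)) (Polynomial (ZMod 2) × Polynomial (ZMod 2)) where
  carrier := {p | X ^ r - 1 ∣ p.1 - h * p.2}
  zero_mem' := by simp
  add_mem' := by
    intro a b ha hb
    have : (a + b).1 - h * (a + b).2 = (a.1 - h * a.2) + (b.1 - h * b.2) := by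
      simp [Prod.fst_add, Prod.snd_add]; ring
    rw [Set.mem_setOf_eq, this]
    exact dvd_add ha hb
  smul_mem' := by
    intro c p hp
    have : (c • p).1 - h * (c • p).2 = c * (p.1 - h * p.2) := by
      simp [Prod.smul_fst, Prod.smul_snd, smul_eq_mul]; ring
    rw [Set.mem_setOf_eq, this]
    exact Dvd.dvd.mul_left hp c

/-- The degree-norm of a pair of polynomials: `|(f, g)| = max(deg f, deg g)`,
valued in `WithBot ℕ` (with `deg 0 = ⊥` playing the role of `-∞`). -/
def degNorm (p : Polynomial (ZMod 2) × Polynomial (ZMod 2)) : WithBot ℕ :=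
  max p.1.degree p.2.degree

section PairDet

variable {R : Type*} [CommRing R]

def pairDet (v w : R × R) : R := v.1 * w.2 - v.2 * w.1

theorem pairDet_sub_smul_right (v w : R × R) (q : R) : pairDet w (v - q • w) = -pairDet v w := by
  simp only [pairDet, Prod.fst_sub, Prod.snd_sub, Prod.smul_fst, Prod.smul_snd, smul_eq_mul]
  ring

theorem linearIndependent_pair_of_pairDet_ne_zero [NoZeroDivisors R] {v w : R × R}
    (hvw : pairDet v w ≠ 0) : LinearIndependent R ![v, w] := by
  rw [LinearIndependent.pair_iff]
  intro s t hst
  have h₁ : s * v.1 + t * w.1 = 0 := by simpa using congrArg Prod.fst hst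
  have h₂ : s * v.2 + t * w.2 = 0 := by simpa using congrArg Prod.snd hst
  have hs : s * pairDet v w = 0 := by
    unfold pairDet; linear_combination w.2 * h₁ - w.1 * h₂
  have ht : t * pairDet v w = 0 := by
    unfold pairDet; linear_combination v.1 * h₂ - v.2 * h₁
  exact ⟨(mul_eq_zero.mp hs).resolve_right hvw, (mul_eq_zero.mp ht).resolve_right hvw⟩

end PairDet

section Reduction

variable {K : Type*} [Field K]

theorem degree_pairDet_of_reduced {v w : K[X] × K[X]} (hv : v.2.degree ≤ v.1.degree)
    (hw : w.1.degree < w.2.degree) :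
    (pairDet v w).degree = max v.1.degree v.2.degree + max w.1.degree w.2.degree := by
  rw [max_eq_left hv, max_eq_right hw.le]
  rcases eq_or_ne v.1 0 with hv₁ | hv₁
  · have hv₂ : v.2 = 0 := by simpa [hv₁] using hv
    simp [pairDet, hv₁, hv₂]
  have hlt : (v.2 * w.1).degree < (v.1 * w.2).degree := by
    rw [degree_mul, degree_mul]
    calc v.2.degree + w.1.degree ≤ v.1.degree + w.1.degree := add_le_add_left hv _
      _ < v.1.degree + w.2.degree :=
        WithBot.add_lt_add_left (degree_eq_bot.not.mpr hv₁) hw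
  rw [pairDet, degree_sub_eq_left_of_degree_lt hlt, degree_mul]

theorem exists_reduced_pair {N : Submodule K[X] (K[X] × K[X])} {v w : K[X] × K[X]}
    (hvN : v ∈ N) (hwN : w ∈ N) (hvw : pairDet v w ≠ 0) (hv : v.2.degree ≤ v.1.degree) :
    ∃ a ∈ N, ∃ b ∈ N, (pairDet a b).degree = (pairDet v w).degree ∧
      a.2.degree ≤ a.1.degree ∧ b.1.degree < b.2.degree := by
  obtain ⟨d, hd⟩ : ∃ d, w.1.degree = d := ⟨_, rfl⟩
  induction d using WellFoundedLT.induction generalizing v w with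
  | ind d ih =>
    rcases lt_or_ge w.1.degree w.2.degree with hw | hw
    · exact ⟨v, hvN, w, hwN, rfl, hv, hw⟩
    have hw₁ : w.1 ≠ 0 := by
      rintro hw₁
      have hw₂ : w.2 = 0 := by simpa [hw₁] using hw
      exact hvw (by simp [pairDet, hw₁, hw₂])
    set w' := v - (v.1 / w.1) • w
    have hw'₁ : w'.1 = v.1 % w.1 := by
      simp [w', EuclideanDomain.mod_eq_sub_mul_div, mul_comm]
    have hdet : pairDet w w' = -pairDet v w := pairDet_sub_smul_right v w _
    obtain ⟨a, haN, b, hbN, hab, ha, hb⟩ :=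
      ih w'.1.degree (by rw [← hd, hw'₁]; exact degree_mod_lt _ hw₁) hwN
        (N.sub_mem hvN (N.smul_mem _ hwN)) (by rw [hdet]; exact neg_ne_zero.mpr hvw) hw rfl
    exact ⟨a, haN, b, hbN, by rw [hab, hdet, degree_neg], ha, hb⟩

end Reduction

/-- There exist two `F₂[x]`-linearly independent vectors `a, b` in the BIKE
lattice `L` with `|a| + |b| = r`. -/
theorem bikeLattice_exists_reduced_pair (r : ℕ) (hr : 0 < r) (h : Polynomial (ZMod 2)) :
    ∃ a b : Polynomial (ZMod 2) × Polynomial (ZMod 2),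
      a ∈ bikeLattice r h ∧ b ∈ bikeLattice r h ∧
      LinearIndependent (Polynomial (ZMod 2)) ![a, b] ∧
      degNorm a + degNorm b = (r : WithBot ℕ) := by
  set m : (ZMod 2)[X] := X ^ r - 1
  have hm : m.degree = r := by simpa using degree_X_pow_sub_C hr (1 : ZMod 2)
  have hmN : (m, 0) ∈ bikeLattice r h := by simp [bikeLattice, m]
  have hhN : (h % m, 1) ∈ bikeLattice r h := by
    show m ∣ h % m - h * 1
    exact ⟨-(h / m), by rw [EuclideanDomain.mod_eq_sub_mul_div]; ring⟩
  have hdet : pairDet (m, 0) (h % m, 1) = m := by simp [pairDet]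
  obtain ⟨a, ha, b, hb, hab, hared, hbred⟩ :=
    exists_reduced_pair hmN hhN (by rw [hdet]; exact X_pow_sub_C_ne_zero hr 1) (by simp)
  have habdeg : (pairDet a b).degree = r := by rw [hab, hdet, hm]
  refine ⟨a, b, ha, hb, linearIndependent_pair_of_pairDet_ne_zero ?_, ?_⟩
  · rintro hab0
    simp [hab0] at habdeg
  · rw [degNorm, degNorm, ← degree_pairDet_of_reduced hared hbred, habdeg]
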